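/- arXiv:1907.01333 — 8 statements merged into one kernel-verified Lean document; each statement's English description precedes it below -/
import Mathlib

section
/- Let π : (0,∞) → (0,∞) be a continuously differentiable probability density satisfying ∫₀^1 |u π'(u)| du < ∞ and such that ξ = lim_{u→∞} u π'(u)/π(u) exists in [-∞,∞] with ξ > -∞. Then for any α, β > 0, ∫₀^∞ |u π'(u)|/(β+u)^α du < ∞. -/
/-!
Since `(β + u) ^ α ≥ β ^ α`, it suffices that `|u π'(u)|` is integrable on `(0, ∞)`. Near `0` this
is assumed and on compact subintervals it follows from continuity. The limit `ξ` cannot be `+∞`: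
otherwise `π' > 0` eventually, so `π` is eventually increasing and bounded below by a positive
constant, which contradicts integrability. So `ξ` is finite, `u π'(u) / π(u)` stays bounded, and
`|u π'(u)| = O(π)` at infinity.
-/

open Real Set Filter MeasureTheory Topology Asymptotics

lemma not_integrableAtFilter_atTop_of_eventually_ge {f : ℝ → ℝ} {c : ℝ} (hc : 0 < c)
    (hf : ∀ᶠ x in atTop, c ≤ f x) : ¬ IntegrableAtFilter f atTop := by
  rintro hint
  obtain ⟨a, ha⟩ := integrableAtFilter_atTop_iff.mp hint
  obtain ⟨b, hb⟩ := eventually_atTop.mp hf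
  have hconst : IntegrableOn (fun _ => c) (Ici (max a b)) := by
    refine Integrable.mono' (ha.mono_set (Ici_subset_Ici.mpr (le_max_left a b)))
      aestronglyMeasurable_const ?_
    filter_upwards [ae_restrict_mem measurableSet_Ici] with x hx
    rw [Real.norm_of_nonneg hc.le]
    exact hb x ((le_max_right a b).trans hx)
  rw [integrableOn_const_iff] at hconst
  simp [hc.ne'] at hconst

lemma monotoneOn_Ici_of_deriv_pos {f : ℝ → ℝ} {M : ℝ} (hf' : ∀ x ∈ Ici M, 0 < deriv f x) :
    MonotoneOn f (Ici M) := by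
  have hdiff : ∀ x ∈ Ici M, DifferentiableAt ℝ f x := fun x hx =>
    differentiableAt_of_deriv_ne_zero (hf' x hx).ne'
  refine monotoneOn_of_deriv_nonneg (convex_Ici M)
    (fun x hx => (hdiff x hx).continuousAt.continuousWithinAt)
    (fun x hx => (hdiff x (interior_subset hx)).differentiableWithinAt)
    (fun x hx => (hf' x (interior_subset hx)).le)

lemma ne_top_of_tendsto_mul_deriv_div {f : ℝ → ℝ} (hpos : ∀ᶠ u in atTop, 0 < f u)
    (hf : IntegrableAtFilter f atTop) {ξ : EReal}
    (hξ : Tendsto (fun u : ℝ => ((u * deriv f u / f u : ℝ) : EReal)) atTop (𝓝 ξ)) :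
    ξ ≠ ⊤ := by
  rintro rfl
  have hderiv : ∀ᶠ u in atTop, 0 < f u ∧ 0 < deriv f u := by
    filter_upwards [EReal.tendsto_nhds_top_iff_real.mp hξ 0, hpos, eventually_gt_atTop 0]
      with u hratio hfu hu
    have : 0 < u * deriv f u := by
      simpa [div_pos_iff_of_pos_right hfu] using (EReal.coe_lt_coe_iff.mp hratio)
    exact ⟨hfu, pos_of_mul_pos_right this hu.le⟩
  obtain ⟨M, hM⟩ := eventually_atTop.mp hderiv
  have hmono := monotoneOn_Ici_of_deriv_pos fun x hx => (hM x hx).2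
  refine not_integrableAtFilter_atTop_of_eventually_ge (hM M le_rfl).1 ?_ hf
  filter_upwards [eventually_ge_atTop M] with x hx
  exact hmono self_mem_Ici hx hx

lemma integrableOn_Ioi_of_isBigO_atTop {g f : ℝ → ℝ} {a : ℝ} (hg : ContinuousOn g (Ioi a))
    (hga : IntegrableAtFilter g (𝓝[>] a)) (ho : g =O[atTop] f)
    (hf : IntegrableAtFilter f atTop) : IntegrableOn g (Ioi a) := by
  have hloc := hg.locallyIntegrableOn measurableSet_Ioi (μ := volume)
  refine integrableOn_Ioi_iff_integrableAtFilter_atTop_nhdsWithin.mpr ⟨?_, hga, hloc⟩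
  exact ho.integrableAtFilter ⟨Ioi a, Ioi_mem_atTop a, hloc.aestronglyMeasurable⟩ hf

lemma IntegrableOn.div_rpow_add {f : ℝ → ℝ} (hf : IntegrableOn f (Ioi 0)) {α β : ℝ}
    (hα : 0 ≤ α) (hβ : 0 < β) : IntegrableOn (fun u => f u / (β + u) ^ α) (Ioi 0) := by
  have hden : Measurable fun u : ℝ => (β + u) ^ α := by fun_prop
  refine Integrable.mono' (hf.norm.div_const (β ^ α))
    (hf.aestronglyMeasurable.div₀ hden.aestronglyMeasurable) ?_
  filter_upwards [ae_restrict_mem measurableSet_Ioi] with u (hu : 0 < u)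
  have hβu : β ≤ β + u := by linarith
  rw [norm_div, Real.norm_of_nonneg (rpow_nonneg (hβ.le.trans hβu) α)]
  exact div_le_div_of_nonneg_left (norm_nonneg _) (rpow_pos_of_pos hβ α)
    (rpow_le_rpow hβ.le hβu hα)

theorem integrable_u_pi_deriv_div
    (pdf : ℝ → ℝ)
    (hpos : ∀ u ∈ Set.Ioi (0:ℝ), 0 < pdf u)
    (hC1 : ContDiffOn ℝ 1 pdf (Set.Ioi 0))
    (hint : IntegrableOn (fun u => |u * deriv pdf u|) (Set.Ioo (0:ℝ) 1))
    (hprob : ∫ u in Set.Ioi (0:ℝ), pdf u = 1)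
    (ξ : EReal) (hξbot : ξ ≠ ⊥)
    (hξ : Filter.Tendsto (fun u : ℝ => ((u * deriv pdf u / pdf u : ℝ) : EReal))
      Filter.atTop (nhds ξ))
    (α β : ℝ) (hα : 0 < α) (hβ : 0 < β) :
    IntegrableOn (fun u => |u * deriv pdf u| / (β + u) ^ α) (Set.Ioi 0) := by
  have hpdf : IntegrableOn pdf (Ioi 0) := by
    by_contra h
    rw [integral_undef h] at hprob
    norm_num at hprob
  have hpdf_top : IntegrableAtFilter pdf atTop := ⟨Ioi 0, Ioi_mem_atTop 0, hpdf⟩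
  have hpos_top : ∀ᶠ u in atTop, 0 < pdf u := (eventually_gt_atTop 0).mono hpos
  lift ξ to ℝ using ⟨ne_top_of_tendsto_mul_deriv_div hpos_top hpdf_top hξ, hξbot⟩ with r
  have hO : (fun u => |u * deriv pdf u|) =O[atTop] pdf :=
    (isBigO_of_div_tendsto_nhds (hpos_top.mono fun _ hu h0 => absurd h0 hu.ne') r
      (EReal.tendsto_coe.mp hξ)).abs_left
  have hcont : ContinuousOn (fun u => |u * deriv pdf u|) (Ioi 0) :=
    (continuousOn_id.mul (hC1.continuousOn_deriv_of_isOpen isOpen_Ioi le_rfl)).abs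
  have hnear0 : IntegrableAtFilter (fun u => |u * deriv pdf u|) (𝓝[>] 0) :=
    ⟨Ioo 0 1, Ioo_mem_nhdsGT one_pos, hint⟩
  exact IntegrableOn.div_rpow_add (integrableOn_Ioi_of_isBigO_atTop hcont hnear0 hO hpdf_top)
    hα.le hβ
end

section
/- Let π : (0,∞) → (0,∞) be a continuously differentiable probability density with ∫₀^1 |u π'(u)| du < ∞ and such that lim_{u→∞} u π'(u)/π(u) exists in [-∞,∞]. Then lim_{u→0⁺} u π(u) = 0 and lim_{u→∞} u π(u) = 0. -/
/-!
Write `g u = u π(u)`, so that `g' = π + u π'`. Near `0` the derivative `g'` is integrable on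
`(0, 1)`, hence `g` has a limit at `0⁺`. At `∞` the ratio `u π'/π → ξ` gives three regimes:
for `ξ = -∞` eventually `g' ≤ 0`, so the nonnegative `g` is eventually antitone and converges;
for finite `ξ`, `g' = O(π)` is integrable near `∞`, so `g` converges; for `ξ = +∞` eventually
`g' ≥ 0`, so `g` is bounded below by a positive constant. In every case a nonzero limit of `u π(u)`
would make `π` at least a multiple of `1/u`, which is not integrable at `0⁺` nor at `∞`.
-/

open Real Set Filter MeasureTheory Topology Asymptotics

theorem AntitoneOn.exists_tendsto_atTop {α β : Type*} [LinearOrder α]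
    [ConditionallyCompletePartialOrderInf β] [TopologicalSpace β] [InfConvergenceClass β]
    {g : α → β} {a : α} (hg : AntitoneOn g (Ici a)) (hbdd : BddBelow (g '' Ici a)) :
    ∃ L, Tendsto g atTop (𝓝 L) := by
  have hanti : Antitone fun x => g (max a x) := fun x y hxy =>
    hg (le_max_left _ _) (le_max_left _ _) (max_le_max_left a hxy)
  have hbdd' : BddBelow (range fun x => g (max a x)) :=
    hbdd.mono (by rintro _ ⟨x, rfl⟩; exact ⟨_, le_max_left _ _, rfl⟩)
  refine ⟨_, (tendsto_atTop_ciInf hanti hbdd').congr' ?_⟩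
  filter_upwards [eventually_ge_atTop a] with x hx
  rw [max_eq_right hx]

theorem tendsto_nhdsGT_of_hasDerivAt_of_integrableOn {E : Type*} [NormedAddCommGroup E]
    [NormedSpace ℝ E] [CompleteSpace E] {g g' : ℝ → E} {a b : ℝ} (hab : a < b)
    (hderiv : ∀ x ∈ Ioc a b, HasDerivAt g (g' x) x) (hint : IntegrableOn g' (Ioc a b)) :
    Tendsto g (𝓝[>] a) (𝓝 (g b - ∫ x in a..b, g' x)) := by
  have hprim : ContinuousWithinAt (fun x => ∫ t in x..b, g' t) (Icc a b) a := by
    refine intervalIntegral.continuousOn_primitive_interval_left ?_ a left_mem_uIcc |>.mono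
      (by rw [uIcc_of_le hab.le])
    rwa [uIcc_of_le hab.le, integrableOn_Icc_iff_integrableOn_Ioc]
  refine ((tendsto_const_nhds.sub hprim).mono_left
    (nhdsWithin_le_of_mem (Icc_mem_nhdsGT hab))).congr' ?_
  filter_upwards [Ioo_mem_nhdsGT hab] with x hx
  have hxb : Icc x b ⊆ Ioc a b := fun y hy => ⟨hx.1.trans_le hy.1, hy.2⟩
  rw [intervalIntegral.integral_eq_sub_of_hasDerivAt
    (fun y hy => hderiv y (hxb (uIcc_of_le hx.2.le ▸ hy)))
    ((intervalIntegrable_iff_integrableOn_Ioc_of_le hx.2.le).2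
      (hint.mono_set (Ioc_subset_Icc_self.trans hxb))), sub_sub_cancel]

/-- `ε ≤ |x f(x)|` makes `f` dominate `x⁻¹ = log'`, which is not integrable wherever
`|log|` blows up. -/
theorem not_integrableOn_of_eventually_le_abs_mul {f : ℝ → ℝ} {k : Set ℝ} {ε : ℝ}
    (l : Filter ℝ) [NeBot l] [TendstoIxxClass Icc l l] (hk : k ∈ l)
    (hlog : Tendsto (fun x => ‖log x‖) l atTop) (hε : 0 < ε)
    (h : ∀ᶠ x in l, ε ≤ |x * f x|) : ¬IntegrableOn f k := by
  have hx₀ : ∀ᶠ x in l, x ≠ 0 := h.mono fun x hx h₀ => by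
    simp only [h₀, zero_mul, abs_zero] at hx; linarith
  refine not_integrableOn_of_tendsto_norm_atTop_of_deriv_isBigO_filter l hk
    (hx₀.mono fun x hx => differentiableAt_log hx) hlog ?_
  rw [deriv_log']
  refine IsBigO.of_bound ε⁻¹ ?_
  filter_upwards [h, hx₀] with x hx hx₀
  rw [abs_mul] at hx
  rw [norm_inv, Real.norm_eq_abs, Real.norm_eq_abs, inv_le_iff_one_le_mul₀ (abs_pos.2 hx₀)]
  calc (1 : ℝ) = ε⁻¹ * ε := (inv_mul_cancel₀ hε.ne').symm
    _ ≤ ε⁻¹ * (|x| * |f x|) := by gcongr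
    _ = _ := by ring

theorem eq_zero_of_tendsto_id_mul_of_integrableAtFilter {f : ℝ → ℝ} {L : ℝ}
    (l : Filter ℝ) [NeBot l] [TendstoIxxClass Icc l l]
    (hlog : Tendsto (fun x => ‖log x‖) l atTop) (hf : IntegrableAtFilter f l)
    (hL : Tendsto (fun x => x * f x) l (𝓝 L)) : L = 0 := by
  by_contra hL₀
  obtain ⟨k, hk, hfk⟩ := hf
  have hpos : 0 < |L| := abs_pos.2 hL₀
  exact not_integrableOn_of_eventually_le_abs_mul l hk hlog (half_pos hpos)
    (hL.abs.eventually (eventually_ge_nhds (half_lt_self hpos))) hfk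

section

variable {f : ℝ → ℝ}

theorem hasDerivAt_id_mul {x : ℝ} (hf : DifferentiableAt ℝ f x) :
    HasDerivAt (fun x => x * f x) (f x + x * deriv f x) x := by
  have h := (hasDerivAt_id' x).mul hf.hasDerivAt
  rwa [one_mul] at h

theorem hasDerivAt_id_mul_of_pos (hf : DifferentiableOn ℝ f (Ioi 0)) {x : ℝ} (hx : 0 < x) :
    HasDerivAt (fun x => x * f x) (f x + x * deriv f x) x :=
  hasDerivAt_id_mul (hf.differentiableAt (Ioi_mem_nhds hx))

theorem exists_tendsto_id_mul_atTop_of_eventually_nonpos (hf : DifferentiableOn ℝ f (Ioi 0))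
    (hf₀ : ∀ x ∈ Ioi 0, 0 ≤ f x) (h : ∀ᶠ x in atTop, f x + x * deriv f x ≤ 0) :
    ∃ L, Tendsto (fun x => x * f x) atTop (𝓝 L) := by
  obtain ⟨a, ha⟩ := eventually_atTop.1 (h.and (eventually_gt_atTop 0))
  have ha₀ : 0 < a := (ha a le_rfl).2
  have hanti : AntitoneOn (fun x => x * f x) (Ici a) := by
    refine antitoneOn_of_hasDerivWithinAt_nonpos (f' := fun x => f x + x * deriv f x)
      (convex_Ici a) (fun x hx => ?_) (fun x hx => ?_) (fun x hx => ?_)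
    · exact (hasDerivAt_id_mul_of_pos hf (ha₀.trans_le hx)).continuousAt.continuousWithinAt
    · rw [interior_Ici] at hx ⊢
      exact (hasDerivAt_id_mul_of_pos hf (ha₀.trans hx)).hasDerivWithinAt
    · rw [interior_Ici] at hx
      exact (ha x hx.le).1
  refine hanti.exists_tendsto_atTop ⟨0, ?_⟩
  rintro _ ⟨x, hx, rfl⟩
  exact mul_nonneg (ha₀.trans_le hx).le (hf₀ x (ha₀.trans_le hx))

theorem exists_tendsto_id_mul_atTop_of_isBigO (hf : DifferentiableOn ℝ f (Ioi 0))
    (hfi : IntegrableAtFilter f atTop) (h : (fun x => x * deriv f x) =O[atTop] f) :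
    ∃ L, Tendsto (fun x => x * f x) atTop (𝓝 L) := by
  have hmeas : StronglyMeasurableAtFilter (fun x => x * deriv f x) atTop :=
    (measurable_id.mul (measurable_deriv f)).stronglyMeasurable.stronglyMeasurableAtFilter
  obtain ⟨a, ha⟩ := integrableAtFilter_atTop_iff.1 (hfi.add (h.integrableAtFilter hmeas hfi))
  have hpos : 0 < max a 1 := lt_max_of_lt_right one_pos
  exact ⟨_, tendsto_limUnder_of_hasDerivAt_of_integrableOn_Ioi
    (fun x hx => hasDerivAt_id_mul_of_pos hf (hpos.trans hx))
    (ha.mono_set fun x hx => (le_max_left a 1).trans hx.le)⟩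

theorem not_integrableAtFilter_of_eventually_nonneg (hf : DifferentiableOn ℝ f (Ioi 0))
    (hpos : ∀ x ∈ Ioi 0, 0 < f x) (h : ∀ᶠ x in atTop, 0 ≤ f x + x * deriv f x) :
    ¬IntegrableAtFilter f atTop := by
  obtain ⟨a, ha⟩ := eventually_atTop.1 (h.and (eventually_gt_atTop 0))
  have ha₀ : 0 < a := (ha a le_rfl).2
  have hmono : MonotoneOn (fun x => x * f x) (Ici a) := by
    refine monotoneOn_of_hasDerivWithinAt_nonneg (f' := fun x => f x + x * deriv f x)
      (convex_Ici a) (fun x hx => ?_) (fun x hx => ?_) (fun x hx => ?_)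
    · exact (hasDerivAt_id_mul_of_pos hf (ha₀.trans_le hx)).continuousAt.continuousWithinAt
    · rw [interior_Ici] at hx ⊢
      exact (hasDerivAt_id_mul_of_pos hf (ha₀.trans hx)).hasDerivWithinAt
    · rw [interior_Ici] at hx
      exact (ha x hx.le).1
  rintro ⟨k, hk, hfk⟩
  refine not_integrableOn_of_eventually_le_abs_mul atTop hk
    (tendsto_norm_atTop_atTop.comp tendsto_log_atTop) (mul_pos ha₀ (hpos a ha₀)) ?_ hfk
  filter_upwards [eventually_ge_atTop a] with x hx
  exact (hmono self_mem_Ici hx hx).trans (le_abs_self _)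

theorem exists_tendsto_id_mul_atTop (hf : DifferentiableOn ℝ f (Ioi 0))
    (hpos : ∀ x ∈ Ioi 0, 0 < f x) (hfi : IntegrableAtFilter f atTop) {ξ : EReal}
    (hξ : Tendsto (fun x => ((x * deriv f x / f x : ℝ) : EReal)) atTop (𝓝 ξ)) :
    ∃ L, Tendsto (fun x => x * f x) atTop (𝓝 L) := by
  have hratio : ∀ᶠ x in atTop, 0 < f x ∧ x * deriv f x = x * deriv f x / f x * f x := by
    filter_upwards [eventually_gt_atTop 0] with x hx
    exact ⟨hpos x hx, (div_mul_cancel₀ _ (hpos x hx).ne').symm⟩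
  induction ξ with
  | bot =>
    refine exists_tendsto_id_mul_atTop_of_eventually_nonpos hf (fun x hx => (hpos x hx).le) ?_
    filter_upwards [hratio, hξ.eventually (eventually_lt_nhds (EReal.bot_lt_coe (-1)))]
      with x ⟨hfx, hx⟩ hlt
    have := EReal.coe_lt_coe_iff.1 hlt
    rw [hx]
    nlinarith
  | coe ξ =>
    refine exists_tendsto_id_mul_atTop_of_isBigO hf hfi ?_
    have hr := (EReal.tendsto_coe.1 hξ).isBigO_one ℝ
    simpa using (hr.mul (isBigO_refl f atTop)).congr' (hratio.mono fun x hx => hx.2.symm) .rfl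
  | top =>
    refine absurd hfi (not_integrableAtFilter_of_eventually_nonneg hf hpos ?_)
    filter_upwards [hratio, hξ.eventually (eventually_gt_nhds (EReal.coe_lt_top (-1)))]
      with x ⟨hfx, hx⟩ hlt
    have := EReal.coe_lt_coe_iff.1 hlt
    rw [hx]
    nlinarith

end

theorem u_pi_tendsto_zero
    (pdf : ℝ → ℝ)
    (hpos : ∀ u ∈ Set.Ioi (0:ℝ), 0 < pdf u)
    (hC1 : ContDiffOn ℝ 1 pdf (Set.Ioi 0))
    (hprob : ∫ u in Set.Ioi (0:ℝ), pdf u = 1)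
    (hint : IntegrableOn (fun u => |u * deriv pdf u|) (Set.Ioo (0:ℝ) 1))
    (ξ : EReal)
    (hξ : Filter.Tendsto (fun u : ℝ => ((u * deriv pdf u / pdf u : ℝ) : EReal))
      Filter.atTop (nhds ξ)) :
    Filter.Tendsto (fun u : ℝ => u * pdf u) (nhdsWithin 0 (Set.Ioi 0)) (nhds 0) ∧
      Filter.Tendsto (fun u : ℝ => u * pdf u) Filter.atTop (nhds 0) := by
  have hf : DifferentiableOn ℝ pdf (Ioi 0) := hC1.differentiableOn one_ne_zero
  have hInt : IntegrableOn pdf (Ioi 0) := Integrable.of_integral_ne_zero (by simp [hprob])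
  constructor
  · have hderiv_int : IntegrableOn (fun u => pdf u + u * deriv pdf u) (Ioc 0 1) := by
      rw [integrableOn_Ioc_iff_integrableOn_Ioo]
      refine (hInt.mono_set Ioo_subset_Ioi_self).add ((integrable_norm_iff ?_).1 hint)
      exact (measurable_id.mul (measurable_deriv pdf)).aestronglyMeasurable
    have hL := tendsto_nhdsGT_of_hasDerivAt_of_integrableOn one_pos
      (fun x hx => hasDerivAt_id_mul_of_pos hf hx.1) hderiv_int
    rwa [eq_zero_of_tendsto_id_mul_of_integrableAtFilter (𝓝[>] 0)
      (tendsto_abs_atBot_atTop.comp tendsto_log_nhdsGT_zero)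
      ⟨Ioi 0, self_mem_nhdsWithin, hInt⟩ hL] at hL
  · obtain ⟨L, hL⟩ := exists_tendsto_id_mul_atTop hf hpos ⟨Ioi 0, Ioi_mem_atTop 0, hInt⟩ hξ
    rwa [eq_zero_of_tendsto_id_mul_of_integrableAtFilter atTop
      (tendsto_norm_atTop_atTop.comp tendsto_log_atTop) ⟨Ioi 0, Ioi_mem_atTop 0, hInt⟩ hL] at hL
end

section
/- Under the EH prior with 0 < α ≤ 1, the marginal density p(λ;α,β,γ) = (β^α γ/Γ(α)) ∫₀^∞ x^{-α} e^{-β/x} (1+λx)^{-1} (1+log(1+λx))^{-(1+γ)} dx tends to +∞ as λ → 0⁺. -/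
open Real Set Filter MeasureTheory

/-!
For `0 < λ < 1` and `1 ≤ x ≤ 1/λ` we have `λx ≤ 1`, so the last two factors of the integrand
are bounded below by `1/2` and `2^{-(1+γ)}`, while `x^{-α} ≥ x⁻¹` (as `α ≤ 1`) and
`e^{-β/x} ≥ e^{-β}`. Hence the integral dominates a constant multiple of
`∫₁^{1/λ} dx/x = -log λ`, which tends to `+∞`. The integral is a genuine (Lebesgue) one
because the integrand is bounded near `0` and `O(x^{-1-α})` at infinity.
-/

noncomputable def ehIntegrand (α β γ l x : ℝ) : ℝ :=
  x ^ (-α) * exp (-β / x) * (1 + l * x)⁻¹ * (1 + log (1 + l * x)) ^ (-(1 + γ))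

section

variable {α β γ l x : ℝ}

lemma one_le_one_add_log_one_add_mul (hl : 0 ≤ l) (hx : 0 ≤ x) :
    1 ≤ 1 + log (1 + l * x) :=
  le_add_of_nonneg_right (log_nonneg (le_add_of_nonneg_right (mul_nonneg hl hx)))

lemma ehIntegrand_nonneg (hl : 0 ≤ l) (hx : 0 < x) : 0 ≤ ehIntegrand α β γ l x := by
  have h₁ : 0 < 1 + l * x := by positivity
  have h₂ := one_le_one_add_log_one_add_mul hl hx.le
  unfold ehIntegrand
  have : 0 ≤ (1 + log (1 + l * x)) ^ (-(1 + γ)) := rpow_nonneg (by linarith) _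
  positivity

lemma ehIntegrand_le (hγ : -1 ≤ γ) (hl : 0 ≤ l) (hx : 0 < x) :
    ehIntegrand α β γ l x ≤ x ^ (-α) * exp (-β / x) * (1 + l * x)⁻¹ := by
  have hlog : (1 + log (1 + l * x)) ^ (-(1 + γ)) ≤ 1 :=
    rpow_le_one_of_one_le_of_nonpos (one_le_one_add_log_one_add_mul hl hx.le) (by linarith)
  have : 0 < 1 + l * x := by positivity
  exact mul_le_of_le_one_right (by positivity) hlog

lemma rpow_neg_mul_exp_neg_div_le_inv (hα : α ≤ 1) (hβ : 0 < β) (hx : 0 < x) (hx1 : x ≤ 1) :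
    x ^ (-α) * exp (-β / x) ≤ β⁻¹ := by
  have hpow : x ^ (-α) ≤ x⁻¹ := by
    rw [← rpow_neg_one]
    exact rpow_le_rpow_of_exponent_ge hx hx1 (by linarith)
  have hexp : exp (-β / x) ≤ x / β := by
    rw [neg_div, exp_neg, ← inv_div β x]
    exact inv_anti₀ (div_pos hβ hx)
      ((le_add_of_nonneg_right zero_le_one).trans (add_one_le_exp _))
  calc x ^ (-α) * exp (-β / x) ≤ x⁻¹ * (x / β) := by gcongr
    _ = β⁻¹ := by field_simp

lemma ehIntegrand_le_inv (hα : α ≤ 1) (hβ : 0 < β) (hγ : -1 ≤ γ) (hl : 0 ≤ l)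
    (hx : 0 < x) (hx1 : x ≤ 1) : ehIntegrand α β γ l x ≤ β⁻¹ :=
  calc ehIntegrand α β γ l x ≤ x ^ (-α) * exp (-β / x) * (1 + l * x)⁻¹ :=
        ehIntegrand_le hγ hl hx
    _ ≤ x ^ (-α) * exp (-β / x) :=
        mul_le_of_le_one_right (by positivity) (inv_le_one_of_one_le₀ (by nlinarith))
    _ ≤ β⁻¹ := rpow_neg_mul_exp_neg_div_le_inv hα hβ hx hx1

lemma ehIntegrand_le_inv_mul_rpow (hβ : 0 ≤ β) (hγ : -1 ≤ γ) (hl : 0 < l) (hx : 0 < x) :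
    ehIntegrand α β γ l x ≤ l⁻¹ * x ^ (-α - 1) :=
  calc ehIntegrand α β γ l x ≤ x ^ (-α) * exp (-β / x) * (1 + l * x)⁻¹ :=
        ehIntegrand_le hγ hl.le hx
    _ ≤ x ^ (-α) * 1 * (l * x)⁻¹ := by
        gcongr
        · exact exp_le_one_iff.2 (div_nonpos_of_nonpos_of_nonneg (by linarith) hx.le)
        · linarith
    _ = l⁻¹ * x ^ (-α - 1) := by
        rw [rpow_sub hx, rpow_one]
        field_simp

lemma integrableOn_ehIntegrand (hα0 : 0 < α) (hα : α ≤ 1) (hβ : 0 < β) (hγ : -1 ≤ γ)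
    (hl : 0 < l) : IntegrableOn (ehIntegrand α β γ l) (Ioi 0) := by
  have hmeas : AEStronglyMeasurable (ehIntegrand α β γ l) :=
    (by unfold ehIntegrand; fun_prop : Measurable (ehIntegrand α β γ l)).aestronglyMeasurable
  rw [← Ioc_union_Ioi_eq_Ioi zero_le_one]
  refine IntegrableOn.union ?_ ?_
  · refine Integrable.mono' (integrableOn_const measure_Ioc_lt_top.ne (C := β⁻¹))
      hmeas.restrict ((ae_restrict_iff' measurableSet_Ioc).2 (.of_forall fun x hx => ?_))
    rw [norm_of_nonneg (ehIntegrand_nonneg hl.le hx.1)]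
    exact ehIntegrand_le_inv hα hβ hγ hl.le hx.1 hx.2
  · refine Integrable.mono'
      ((integrableOn_Ioi_rpow_of_lt (a := -α - 1) (by linarith) one_pos).const_mul l⁻¹)
      hmeas.restrict ((ae_restrict_iff' measurableSet_Ioi).2 (.of_forall fun x hx => ?_))
    have hx0 : 0 < x := zero_lt_one.trans hx
    rw [norm_of_nonneg (ehIntegrand_nonneg hl.le hx0)]
    exact ehIntegrand_le_inv_mul_rpow hβ.le hγ hl hx0

lemma mul_inv_le_ehIntegrand (hα : α ≤ 1) (hβ : 0 ≤ β) (hγ : -1 ≤ γ) (hl : 0 < l)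
    (hx : 1 ≤ x) (hxl : x ≤ l⁻¹) :
    exp (-β) * 2⁻¹ * 2 ^ (-(1 + γ)) * x⁻¹ ≤ ehIntegrand α β γ l x := by
  have hx0 : 0 < x := zero_lt_one.trans_le hx
  have hlx : l * x ≤ 1 := by rwa [← le_div_iff₀' hl, one_div]
  have hpow : x⁻¹ ≤ x ^ (-α) := by
    rw [← rpow_neg_one]
    exact rpow_le_rpow_of_exponent_le hx (by linarith)
  have hexp : exp (-β) ≤ exp (-β / x) := by
    gcongr
    rw [neg_div, neg_le_neg_iff]
    exact div_le_self hβ hx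
  have hlog : 1 + log (1 + l * x) ≤ 2 := by
    have := log_le_sub_one_of_pos (show 0 < 1 + l * x by positivity)
    linarith
  calc exp (-β) * 2⁻¹ * 2 ^ (-(1 + γ)) * x⁻¹
      = x⁻¹ * exp (-β) * 2⁻¹ * 2 ^ (-(1 + γ)) := by ring
    _ ≤ ehIntegrand α β γ l x := by
        have hinv : (2 : ℝ)⁻¹ ≤ (1 + l * x)⁻¹ := inv_anti₀ (by positivity) (by linarith)
        have hrpow : (2 : ℝ) ^ (-(1 + γ)) ≤ (1 + log (1 + l * x)) ^ (-(1 + γ)) :=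
          rpow_le_rpow_of_nonpos
            (zero_lt_one.trans_le (one_le_one_add_log_one_add_mul hl.le hx0.le)) hlog
            (by linarith)
        unfold ehIntegrand
        gcongr

lemma mul_neg_log_le_integral_ehIntegrand (hα0 : 0 < α) (hα : α ≤ 1) (hβ : 0 < β)
    (hγ : -1 ≤ γ) (hl : 0 < l) (hl1 : l ≤ 1) :
    exp (-β) * 2⁻¹ * 2 ^ (-(1 + γ)) * -log l ≤ ∫ x in Ioi 0, ehIntegrand α β γ l x := by
  set c := exp (-β) * 2⁻¹ * 2 ^ (-(1 + γ))
  have hl1' : 1 ≤ l⁻¹ := one_le_inv₀ hl |>.2 hl1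
  have hsub : Ioc 1 l⁻¹ ⊆ Ioi (0 : ℝ) := fun x hx => zero_lt_one.trans hx.1
  have hint := integrableOn_ehIntegrand hα0 hα hβ hγ hl
  calc c * -log l = ∫ x in Ioc 1 l⁻¹, c * x⁻¹ := by
        rw [integral_const_mul, ← intervalIntegral.integral_of_le hl1',
          integral_inv_of_pos one_pos (by positivity), div_one, log_inv]
    _ ≤ ∫ x in Ioc 1 l⁻¹, ehIntegrand α β γ l x := by
        have hinv : IntegrableOn (fun x : ℝ => x⁻¹) (Ioc 1 l⁻¹) :=
          (continuousOn_inv₀.mono fun x hx => (zero_lt_one.trans_le hx.1).ne').integrableOn_Icc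
            |>.mono_set Ioc_subset_Icc_self
        exact setIntegral_mono_on (hinv.const_mul c) (hint.mono_set hsub) measurableSet_Ioc
          fun x hx => mul_inv_le_ehIntegrand hα hβ.le hγ hl hx.1.le hx.2
    _ ≤ ∫ x in Ioi 0, ehIntegrand α β γ l x :=
        setIntegral_mono_set hint
          ((ae_restrict_iff' measurableSet_Ioi).2
            (.of_forall fun x hx => ehIntegrand_nonneg hl.le hx))
          (.of_forall hsub)

end

theorem eh_marginal_at_zero_alpha_le_one (α β γ : ℝ) (hα0 : 0 < α) (hα : α ≤ 1)
    (hβ : 0 < β) (hγ : 0 < γ) :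
    Filter.Tendsto
      (fun l : ℝ => (β ^ α * γ / Real.Gamma α) *
        ∫ x in Set.Ioi (0:ℝ),
          x ^ (-α) * Real.exp (-β / x) * (1 + l * x)⁻¹ *
            (1 + Real.log (1 + l * x)) ^ (-(1 + γ)))
      (nhdsWithin 0 (Set.Ioi 0)) Filter.atTop := by
  have hK : 0 < β ^ α * γ / Gamma α := by
    have := Gamma_pos_of_pos hα0
    positivity
  have hlower : Tendsto
      (fun l => β ^ α * γ / Gamma α * (exp (-β) * 2⁻¹ * 2 ^ (-(1 + γ)) * -log l))
      (nhdsWithin 0 (Ioi 0)) atTop :=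
    ((tendsto_neg_atBot_atTop.comp tendsto_log_nhdsGT_zero).const_mul_atTop
      (by positivity)).const_mul_atTop hK
  refine tendsto_atTop_mono' _ ?_ hlower
  filter_upwards [Ioc_mem_nhdsGT zero_lt_one] with l hl
  exact mul_le_mul_of_nonneg_left
    (mul_neg_log_le_integral_ehIntegrand hα0 hα hβ (by linarith) hl.1 hl.2) hK.le
end

section
/- Fix γ > 0 and λ ≥ 1. For every x > 0, the following bound holds: ((1+λ)/(1+λx)) · ((1+log(1+λ))/(1+log(1+λx)))^{1+γ} ≤ (2/x)(1 + x^{-(1+γ)}). -/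
open Real

theorem eh_integrand_bound (γ l x : ℝ) (hγ : 0 < γ) (hl : 1 ≤ l) (hx : 0 < x) :
    ((1 + l) / (1 + l * x)) *
        ((1 + Real.log (1 + l)) / (1 + Real.log (1 + l * x))) ^ (1 + γ)
      ≤ (2 / x) * (1 + x ^ (-(1 + γ))) := by
  have hl0 : (0:ℝ) < l := lt_of_lt_of_le one_pos hl
  have hlx : (0:ℝ) < l * x := mul_pos hl0 hx
  have hden : (0:ℝ) < 1 + l * x := by linarith
  have hlogl : 0 ≤ Real.log (1 + l) := Real.log_nonneg (by linarith)
  have hloglx : 0 ≤ Real.log (1 + l * x) := Real.log_nonneg (by linarith)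
  have hDen : (0:ℝ) < 1 + Real.log (1 + l * x) := by linarith
  have hNum : (0:ℝ) ≤ 1 + Real.log (1 + l) := by linarith
  have hexp : (0:ℝ) ≤ 1 + γ := by linarith
  -- First factor bound: (1+l)/(1+l*x) ≤ 2/x
  have h1 : (1 + l) / (1 + l * x) ≤ 2 / x := by
    rw [div_le_div_iff₀ hden hx]
    have : x ≤ l * x := le_mul_of_one_le_left hx.le hl
    nlinarith
  -- Second factor bound
  have h2 : ((1 + Real.log (1 + l)) / (1 + Real.log (1 + l * x))) ^ (1 + γ)
      ≤ 1 + x ^ (-(1 + γ)) := by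
    rcases le_or_gt 1 x with hx1 | hx1
    · -- x ≥ 1 : ratio ≤ 1
      have hle : (1 + Real.log (1 + l)) / (1 + Real.log (1 + l * x)) ≤ 1 := by
        rw [div_le_one hDen]
        have : Real.log (1 + l) ≤ Real.log (1 + l * x) :=
          Real.log_le_log (by linarith) (by nlinarith)
        linarith
      have := Real.rpow_le_one (div_nonneg hNum hDen.le) hle hexp
      have hpos : (0:ℝ) < x ^ (-(1 + γ)) := Real.rpow_pos_of_pos hx _
      linarith
    · -- x < 1 : ratio ≤ x⁻¹
      have hbern : (1 + l) ^ x ≤ 1 + x * l :=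
        rpow_one_add_le_one_add_mul_self (by linarith) hx.le hx1.le
      have hlog : x * Real.log (1 + l) ≤ Real.log (1 + l * x) := by
        have h1 : x * Real.log (1 + l) = Real.log ((1 + l) ^ x) := by
          rw [Real.log_rpow (by linarith)]
        rw [h1]
        exact Real.log_le_log (Real.rpow_pos_of_pos (by linarith) x) (by linarith [hbern, mul_comm x l])
      have hle : (1 + Real.log (1 + l)) / (1 + Real.log (1 + l * x)) ≤ x⁻¹ := by
        rw [div_le_iff₀ hDen]
        rw [inv_mul_eq_div, le_div_iff₀ hx]
        nlinarith
      have hr : ((1 + Real.log (1 + l)) / (1 + Real.log (1 + l * x))) ^ (1 + γ)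
          ≤ (x⁻¹) ^ (1 + γ) :=
        Real.rpow_le_rpow (div_nonneg hNum hDen.le) hle hexp
      have : (x⁻¹) ^ (1 + γ) = x ^ (-(1 + γ)) := by
        rw [← Real.rpow_neg_one x, ← Real.rpow_mul hx.le]
        ring_nf
      rw [this] at hr
      linarith
  have hA : (0:ℝ) ≤ (1 + l) / (1 + l * x) := div_nonneg (by linarith) hden.le
  have hB : (0:ℝ) ≤ ((1 + Real.log (1 + l)) / (1 + Real.log (1 + l * x))) ^ (1 + γ) :=
    Real.rpow_nonneg (div_nonneg hNum hDen.le) _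
  calc ((1 + l) / (1 + l * x)) *
        ((1 + Real.log (1 + l)) / (1 + Real.log (1 + l * x))) ^ (1 + γ)
      ≤ (2 / x) * (1 + x ^ (-(1 + γ))) :=
    mul_le_mul h1 h2 hB (by positivity)
end

section
/- Under the EH prior, the ratio p(λ;α,β,γ)/π_EH(λ;γ) converges to 1 as λ → ∞, where p(λ;α,β,γ) = (β^α γ/Γ(α)) ∫₀^∞ x^{-α} e^{-β/x} (1+λx)^{-1}(1+log(1+λx))^{-(1+γ)} dx and π_EH(λ;γ) = γ(1+λ)^{-1}(1+log(1+λ))^{-(1+γ)}. -/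
/-!
The ratio equals `β^α/Γ(α) · ∫ x^{-α} e^{-β/x} π_EH(λx)/π_EH(λ) dx`. The EH prior is regularly
varying with index `-1`: `π_EH(λx)/π_EH(λ) → 1/x`, and for `λ ≥ 1` this ratio is at most
`(2/x)(1 + 2/x)^{1+γ}`, a bound integrable against `x^{-α} e^{-β/x}`. Dominated convergence turns
the integral into `∫ x^{-α-1} e^{-β/x} dx = Γ(α)/β^α`.
-/

open Real Set Filter MeasureTheory Topology

theorem integral_rpow_neg_sub_one_mul_exp_neg_div {a b : ℝ} (ha : 0 < a) (hb : 0 < b) :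
    ∫ x in Ioi 0, x ^ (-a - 1) * exp (-b / x) = Gamma a / b ^ a := by
  have hsubst := integral_comp_rpow_Ioi (fun y : ℝ => y ^ (a - 1) * exp (-(b * y)))
    (p := -1) (by norm_num)
  rw [integral_rpow_mul_exp_neg_mul_Ioi ha hb, one_div, inv_rpow hb.le, ← div_eq_inv_mul]
    at hsubst
  rw [← hsubst]
  refine setIntegral_congr_fun measurableSet_Ioi fun x (hx : 0 < x) => ?_
  have hpow : x ^ (-a - 1) = x ^ ((-1:ℝ) - 1) * (x ^ (-1:ℝ)) ^ (a - 1) := by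
    rw [← rpow_mul hx.le, ← rpow_add hx]; ring_nf
  simp only [hpow, rpow_neg_one, smul_eq_mul, abs_neg, abs_one, one_mul, div_eq_mul_inv, neg_mul]
  ring

theorem integrableOn_rpow_neg_sub_one_mul_exp_neg_div {a b : ℝ} (ha : 0 < a) (hb : 0 < b) :
    IntegrableOn (fun x => x ^ (-a - 1) * exp (-b / x)) (Ioi 0) :=
  .of_integral_ne_zero <| by
    rw [integral_rpow_neg_sub_one_mul_exp_neg_div ha hb]
    exact (div_pos (Gamma_pos_of_pos ha) (rpow_pos_of_pos hb a)).ne'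

noncomputable def ehPrior (γ t : ℝ) : ℝ := γ * (1 + t)⁻¹ * (1 + log (1 + t)) ^ (-(1 + γ))

theorem one_le_one_add_log_one_add {t : ℝ} (ht : 0 ≤ t) : 1 ≤ 1 + log (1 + t) := by
  have := log_nonneg (by linarith : (1:ℝ) ≤ 1 + t); linarith

theorem ehPrior_mul_div_ehPrior {γ l x : ℝ} (hγ : γ ≠ 0) (hl : 0 ≤ l) (hx : 0 ≤ x) :
    ehPrior γ (l * x) / ehPrior γ l =
      (1 + l) / (1 + l * x) * ((1 + log (1 + l)) / (1 + log (1 + l * x))) ^ (1 + γ) := by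
  have hlx : 0 ≤ l * x := mul_nonneg hl hx
  have hL := (one_le_one_add_log_one_add hl).trans_lt' zero_lt_one
  have hLx := (one_le_one_add_log_one_add hlx).trans_lt' zero_lt_one
  have : 0 < (1 + log (1 + l * x)) ^ (1 + γ) := rpow_pos_of_pos hLx _
  have : 0 < (1 + log (1 + l)) ^ (1 + γ) := rpow_pos_of_pos hL _
  have : 0 < 1 + l * x := by linarith
  rw [ehPrior, ehPrior, div_rpow hL.le hLx.le, rpow_neg hL.le, rpow_neg hLx.le]
  field_simp

theorem tendsto_one_add_div_one_add_mul {x : ℝ} (hx : 0 < x) :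
    Tendsto (fun l => (1 + l) / (1 + l * x)) atTop (𝓝 x⁻¹) := by
  have h := (tendsto_inv_atTop_zero.add_const 1).div (tendsto_inv_atTop_zero.add_const x)
    (by simpa using hx.ne')
  rw [zero_add, zero_add, one_div] at h
  refine h.congr' ?_
  filter_upwards [eventually_gt_atTop 0] with l hl
  have : 0 < 1 + l * x := by positivity
  simp only [Pi.div_apply]
  field_simp

theorem tendsto_one_add_log_div_one_add_log_mul {x : ℝ} (hx : 0 < x) :
    Tendsto (fun l => (1 + log (1 + l)) / (1 + log (1 + l * x))) atTop (𝓝 1) := by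
  have hden : Tendsto (fun l => 1 + log (1 + l * x)) atTop atTop :=
    tendsto_atTop_add_const_left _ _ <| tendsto_log_atTop.comp <|
      tendsto_atTop_add_const_left _ _ <| tendsto_id.atTop_mul_const hx
  have h := ((tendsto_one_add_div_one_add_mul hx).log (inv_ne_zero hx.ne')).div_atTop hden
    |>.const_add 1
  rw [add_zero] at h
  refine h.congr' ?_
  filter_upwards [eventually_ge_atTop 0] with l hl
  have : 0 < 1 + l * x := by positivity
  have := (one_le_one_add_log_one_add (mul_nonneg hl hx.le)).trans_lt' zero_lt_one
  rw [log_div (by positivity) (by positivity)]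
  field_simp
  ring

theorem tendsto_ehPrior_mul_div_ehPrior {γ x : ℝ} (hγ : γ ≠ 0) (hx : 0 < x) :
    Tendsto (fun l => ehPrior γ (l * x) / ehPrior γ l) atTop (𝓝 x⁻¹) := by
  have h := (tendsto_one_add_div_one_add_mul hx).mul
    ((tendsto_one_add_log_div_one_add_log_mul hx).rpow_const (p := 1 + γ) (.inl one_ne_zero))
  rw [one_rpow, mul_one] at h
  refine h.congr' ?_
  filter_upwards [eventually_ge_atTop 0] with l hl
  rw [ehPrior_mul_div_ehPrior hγ hl hx.le]

theorem one_add_div_one_add_mul_le {l x : ℝ} (hl : 1 ≤ l) (hx : 0 < x) :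
    (1 + l) / (1 + l * x) ≤ 2 / x := by
  rw [div_le_div_iff₀ (by positivity) hx]
  nlinarith

theorem one_add_log_div_one_add_log_mul_le {l x : ℝ} (hl : 1 ≤ l) (hx : 0 < x) :
    (1 + log (1 + l)) / (1 + log (1 + l * x)) ≤ 1 + 2 / x := by
  have hlx : 0 < 1 + l * x := by positivity
  have hLx := one_le_one_add_log_one_add (by positivity : 0 ≤ l * x)
  have hratio := one_add_div_one_add_mul_le hl hx
  -- with `r = (1 + l) / (1 + l x)`: `log (1 + l) = log r + log (1 + l x)`, `log r ≤ r - 1 ≤ 2 / x`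
  have hlog : log (1 + l) ≤ 2 / x + log (1 + l * x) := by
    have := log_le_sub_one_of_pos (by positivity : 0 < (1 + l) / (1 + l * x))
    rw [log_div (by positivity) hlx.ne'] at this
    linarith
  rw [div_le_iff₀ (by linarith)]
  nlinarith [div_pos two_pos hx]

theorem abs_ehPrior_mul_div_ehPrior_le {γ l x : ℝ} (hγ : 0 < γ) (hl : 1 ≤ l) (hx : 0 < x) :
    |ehPrior γ (l * x) / ehPrior γ l| ≤ 2 / x * (1 + 2 / x) ^ (1 + γ) := by
  have hL := one_le_one_add_log_one_add (zero_le_one.trans hl)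
  have hLx := one_le_one_add_log_one_add (by positivity : 0 ≤ l * x)
  rw [ehPrior_mul_div_ehPrior hγ.ne' (zero_le_one.trans hl) hx.le,
    abs_of_nonneg (by positivity)]
  gcongr ?_ * ?_ ^ _
  · exact one_add_div_one_add_mul_le hl hx
  · exact one_add_log_div_one_add_log_mul_le hl hx

theorem one_add_two_div_rpow_le {x p : ℝ} (hx : 0 < x) (hp : 0 ≤ p) :
    (1 + 2 / x) ^ p ≤ 3 ^ p * (1 + x ^ (-p)) := by
  have hmax : 1 + 2 / x ≤ 3 * max 1 x⁻¹ := by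
    rw [div_eq_mul_inv]; linarith [le_max_left 1 x⁻¹, le_max_right 1 x⁻¹]
  calc (1 + 2 / x) ^ p ≤ (3 * max 1 x⁻¹) ^ p := by gcongr
    _ = 3 ^ p * max 1 (x ^ (-p)) := by
      rw [mul_rpow (by norm_num) (by positivity), rpow_max zero_le_one (by positivity) hp,
        one_rpow, inv_rpow hx.le, rpow_neg hx.le]
    _ ≤ 3 ^ p * (1 + x ^ (-p)) := by
      gcongr; exact max_le_add_of_nonneg zero_le_one (by positivity)

theorem tendsto_integral_mul_ehPrior_mul_div_ehPrior {α β γ : ℝ} (hα : 0 < α) (hβ : 0 < β)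
    (hγ : 0 < γ) :
    Tendsto (fun l => ∫ x in Ioi 0, x ^ (-α) * exp (-β / x) * (ehPrior γ (l * x) / ehPrior γ l))
      atTop (𝓝 (Gamma α / β ^ α)) := by
  set p := 1 + γ
  have hp : 0 < p := by positivity
  rw [← integral_rpow_neg_sub_one_mul_exp_neg_div hα hβ]
  refine tendsto_integral_filter_of_dominated_convergence
    (fun x => 2 * 3 ^ p * (x ^ (-α - 1) * exp (-β / x) + x ^ (-(α + p) - 1) * exp (-β / x)))
    (.of_forall fun l => by unfold ehPrior; fun_prop) ?_
    (((integrableOn_rpow_neg_sub_one_mul_exp_neg_div hα hβ).add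
      (integrableOn_rpow_neg_sub_one_mul_exp_neg_div (by positivity) hβ)).const_mul _) ?_
  · filter_upwards [eventually_ge_atTop 1] with l hl
    refine (ae_restrict_iff' measurableSet_Ioi).2 (.of_forall fun x (hx : 0 < x) => ?_)
    have hsplit : x ^ (-(α + p) - 1) = x ^ (-α) * x ^ (-p) / x := by
      rw [rpow_sub_one hx.ne', neg_add, rpow_add hx]
    calc ‖x ^ (-α) * exp (-β / x) * (ehPrior γ (l * x) / ehPrior γ l)‖
        = x ^ (-α) * exp (-β / x) * |ehPrior γ (l * x) / ehPrior γ l| := by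
          rw [norm_mul, Real.norm_of_nonneg (by positivity), Real.norm_eq_abs]
      _ ≤ x ^ (-α) * exp (-β / x) * (2 / x * (3 ^ p * (1 + x ^ (-p)))) := by
          gcongr
          exact (abs_ehPrior_mul_div_ehPrior_le hγ hl hx).trans <|
            by gcongr; exact one_add_two_div_rpow_le hx hp.le
      _ = _ := by rw [hsplit, rpow_sub_one hx.ne']; ring
  · refine (ae_restrict_iff' measurableSet_Ioi).2 (.of_forall fun x (hx : 0 < x) => ?_)
    convert (tendsto_ehPrior_mul_div_ehPrior hγ.ne' hx).const_mul (x ^ (-α) * exp (-β / x))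
      using 2
    rw [rpow_sub_one hx.ne']
    ring

theorem eh_marginal_tail_equiv (α β γ : ℝ) (hα : 0 < α) (hβ : 0 < β) (hγ : 0 < γ) :
    Filter.Tendsto
      (fun l : ℝ =>
        ((β ^ α * γ / Real.Gamma α) *
          ∫ x in Set.Ioi (0:ℝ),
            x ^ (-α) * Real.exp (-β / x) * (1 + l * x)⁻¹ *
              (1 + Real.log (1 + l * x)) ^ (-(1 + γ))) /
        (γ * (1 + l)⁻¹ * (1 + Real.log (1 + l)) ^ (-(1 + γ))))
      Filter.atTop (nhds 1) := by
  have h := (tendsto_integral_mul_ehPrior_mul_div_ehPrior hα hβ hγ).const_mul (β ^ α / Gamma α)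
  rw [div_mul_div_comm, mul_comm, div_self (by positivity)] at h
  refine h.congr fun l => ?_
  have hnum : ∫ x in Ioi 0, x ^ (-α) * exp (-β / x) * ehPrior γ (l * x) =
      γ * ∫ x in Ioi 0, x ^ (-α) * exp (-β / x) * (1 + l * x)⁻¹ *
        (1 + log (1 + l * x)) ^ (-(1 + γ)) := by
    rw [← integral_const_mul]
    simp only [ehPrior]
    congr 1 with x
    ring
  simp_rw [← mul_div_assoc]
  rw [integral_div, hnum, ehPrior]
  ring
end

section
/- Let π be a strictly positive continuous probability density on (0,∞). For y a nonnegative integer and fixed α, β > 0, define H(u;y) = ((u/β)/(1+u/β))^y (1+u/β)^{-α}. Then lim_{y→∞} [∫₀^∞ β/(β+u) H(u;y) π(u) du] / [∫₀^∞ H(u;y) π(u) du] = 0. -/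
open Real Set Filter MeasureTheory

theorem shrinkage_factor_tendsto_zero
    (α β : ℝ) (hα : 0 < α) (hβ : 0 < β)
    (pdf : ℝ → ℝ)
    (hpos : ∀ u ∈ Set.Ioi (0:ℝ), 0 < pdf u)
    (hcont : ContinuousOn pdf (Set.Ioi 0))
    (hint : IntegrableOn pdf (Set.Ioi 0)) :
    Filter.Tendsto
      (fun y : ℕ =>
        (∫ u in Set.Ioi (0:ℝ),
            (β / (β + u)) * ((u / (β + u)) ^ y * (β / (β + u)) ^ α * pdf u)) /
        (∫ u in Set.Ioi (0:ℝ), (u / (β + u)) ^ y * (β / (β + u)) ^ α * pdf u))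
      Filter.atTop (nhds 0) := by
  -- abbreviations
  set w : ℝ → ℝ := fun u => (β / (β + u)) ^ α * pdf u with hw_def
  set F : ℕ → ℝ → ℝ := fun y u => (u / (β + u)) ^ y * (β / (β + u)) ^ α * pdf u with hF_def
  -- basic pointwise facts on Ioi 0
  have hBu : ∀ u ∈ Ioi (0:ℝ), 0 < β + u := fun u hu => by
    have : (0:ℝ) < u := hu; linarith
  have hs_pos : ∀ u ∈ Ioi (0:ℝ), 0 < β / (β + u) := fun u hu =>
    div_pos hβ (hBu u hu)
  have hs_le_one : ∀ u ∈ Ioi (0:ℝ), β / (β + u) ≤ 1 := fun u hu => by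
    have hu : (0:ℝ) < u := hu
    rw [div_le_one (hBu u hu)]; linarith
  have hr_nonneg : ∀ u ∈ Ioi (0:ℝ), 0 ≤ u / (β + u) := fun u hu =>
    div_nonneg (le_of_lt hu) (hBu u hu).le
  have hr_pos : ∀ u ∈ Ioi (0:ℝ), 0 < u / (β + u) := fun u hu =>
    div_pos hu (hBu u hu)
  have hr_le_one : ∀ u ∈ Ioi (0:ℝ), u / (β + u) ≤ 1 := fun u hu => by
    rw [div_le_one (hBu u hu)]; linarith
  have hr_mono : ∀ u ∈ Ioi (0:ℝ), ∀ v ∈ Ioi (0:ℝ), u ≤ v → u / (β + u) ≤ v / (β + v) := by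
    intro u hu v hv huv
    rw [div_le_div_iff₀ (hBu u hu) (hBu v hv)]
    nlinarith
  have hrpow_pos : ∀ u ∈ Ioi (0:ℝ), 0 < (β / (β + u)) ^ α := fun u hu =>
    Real.rpow_pos_of_pos (hs_pos u hu) α
  have hrpow_le_one : ∀ u ∈ Ioi (0:ℝ), (β / (β + u)) ^ α ≤ 1 := fun u hu =>
    Real.rpow_le_one (hs_pos u hu).le (hs_le_one u hu) hα.le
  have hw_pos : ∀ u ∈ Ioi (0:ℝ), 0 < w u := fun u hu =>
    mul_pos (hrpow_pos u hu) (hpos u hu)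
  have hw_le_pdf : ∀ u ∈ Ioi (0:ℝ), w u ≤ pdf u := fun u hu => by
    have := mul_le_of_le_one_left (hpos u hu).le (hrpow_le_one u hu)
    simpa [hw_def] using this
  have hF_nonneg : ∀ y : ℕ, ∀ u ∈ Ioi (0:ℝ), 0 ≤ F y u := fun y u hu =>
    mul_nonneg (mul_nonneg (pow_nonneg (hr_nonneg u hu) y) (hrpow_pos u hu).le) (hpos u hu).le
  have hF_pos : ∀ y : ℕ, ∀ u ∈ Ioi (0:ℝ), 0 < F y u := fun y u hu =>
    mul_pos (mul_pos (pow_pos (hr_pos u hu) y) (hrpow_pos u hu)) (hpos u hu)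
  have hFw : ∀ y : ℕ, ∀ u : ℝ, F y u = (u / (β + u)) ^ y * w u := fun y u => by
    simp [hF_def, hw_def, mul_assoc]
  have hF_le_w : ∀ y : ℕ, ∀ u ∈ Ioi (0:ℝ), F y u ≤ w u := fun y u hu => by
    rw [hFw]
    have h1 : (u / (β + u)) ^ y ≤ 1 := pow_le_one₀ (hr_nonneg u hu) (hr_le_one u hu)
    exact mul_le_of_le_one_left (hw_pos u hu).le h1
  -- continuity / measurability
  have hcontBu : ContinuousOn (fun u : ℝ => β / (β + u)) (Ioi 0) := by
    apply ContinuousOn.div continuousOn_const (by fun_prop)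
    intro u hu; exact (hBu u hu).ne'
  have hcontR : ContinuousOn (fun u : ℝ => u / (β + u)) (Ioi 0) := by
    apply ContinuousOn.div continuousOn_id (by fun_prop)
    intro u hu; exact (hBu u hu).ne'
  have hcontRpow : ContinuousOn (fun u : ℝ => (β / (β + u)) ^ α) (Ioi 0) :=
    hcontBu.rpow_const (fun u hu => Or.inl (hs_pos u hu).ne')
  have hw_cont : ContinuousOn w (Ioi 0) := hcontRpow.mul hcont
  have hF_cont : ∀ y : ℕ, ContinuousOn (F y) (Ioi 0) := fun y =>
    ((hcontR.pow y).mul hcontRpow).mul hcont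
  have hG_cont : ∀ y : ℕ, ContinuousOn (fun u => (β / (β + u)) * F y u) (Ioi 0) := fun y =>
    hcontBu.mul (hF_cont y)
  -- integrability
  have hw_int : IntegrableOn w (Ioi 0) := by
    apply hint.mono' (hw_cont.aestronglyMeasurable measurableSet_Ioi)
    rw [ae_restrict_iff' measurableSet_Ioi]
    filter_upwards with u hu
    rw [Real.norm_eq_abs, abs_of_nonneg (hw_pos u hu).le]
    exact hw_le_pdf u hu
  have hF_int : ∀ y : ℕ, IntegrableOn (F y) (Ioi 0) := by
    intro y
    apply hw_int.mono' ((hF_cont y).aestronglyMeasurable measurableSet_Ioi)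
    rw [ae_restrict_iff' measurableSet_Ioi]
    filter_upwards with u hu
    rw [Real.norm_eq_abs, abs_of_nonneg (hF_nonneg y u hu)]
    exact hF_le_w y u hu
  have hG_int : ∀ y : ℕ, IntegrableOn (fun u => (β / (β + u)) * F y u) (Ioi 0) := by
    intro y
    apply (hF_int y).mono' ((hG_cont y).aestronglyMeasurable measurableSet_Ioi)
    rw [ae_restrict_iff' measurableSet_Ioi]
    filter_upwards with u hu
    rw [Real.norm_eq_abs, abs_of_nonneg (mul_nonneg (hs_pos u hu).le (hF_nonneg y u hu))]
    exact mul_le_of_le_one_left (hF_nonneg y u hu) (hs_le_one u hu)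
  -- positivity of the denominator
  have hD_pos : ∀ y : ℕ, 0 < ∫ u in Ioi (0:ℝ), F y u := by
    intro y
    rw [setIntegral_pos_iff_support_of_nonneg_ae ?_ (hF_int y)]
    · have hsub : Ioi (0:ℝ) ⊆ Function.support (F y) := fun u hu => (hF_pos y u hu).ne'
      have : Function.support (F y) ∩ Ioi 0 = Ioi 0 := inter_eq_right.mpr hsub
      rw [this, Real.volume_Ioi]
      exact ENNReal.zero_lt_top
    · filter_upwards [ae_restrict_mem measurableSet_Ioi] with u hu
      exact hF_nonneg y u hu
  have hN_nonneg : ∀ y : ℕ, 0 ≤ ∫ u in Ioi (0:ℝ), (β / (β + u)) * F y u := fun y =>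
    setIntegral_nonneg measurableSet_Ioi fun u hu =>
      mul_nonneg (hs_pos u hu).le (hF_nonneg y u hu)
  -- main ε argument
  rw [NormedAddCommGroup.tendsto_nhds_zero]
  intro ε hε
  -- choose cutoffs
  set u₀ : ℝ := max 1 (2 * β / ε) with hu₀_def
  have hu₀_pos : 0 < u₀ := lt_of_lt_of_le one_pos (le_max_left _ _)
  have hu₀_ge : 2 * β / ε ≤ u₀ := le_max_right _ _
  set u₁ : ℝ := u₀ + 1 with hu₁_def
  have hu₁_pos : 0 < u₁ := by positivity
  have hu₁_mem : u₁ ∈ Ioi (0:ℝ) := hu₁_pos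
  have hu₀_mem : u₀ ∈ Ioi (0:ℝ) := hu₀_pos
  set r₀ : ℝ := u₀ / (β + u₀) with hr₀_def
  set r₁ : ℝ := u₁ / (β + u₁) with hr₁_def
  have hr₀_pos : 0 < r₀ := hr_pos u₀ hu₀_mem
  have hr₁_pos : 0 < r₁ := hr_pos u₁ hu₁_mem
  have hr₀_lt_r₁ : r₀ < r₁ := by
    rw [hr₀_def, hr₁_def, div_lt_div_iff₀ (hBu u₀ hu₀_mem) (hBu u₁ hu₁_mem)]
    nlinarith
  -- the shrinkage factor is small beyond u₀
  have hsmall : ∀ u : ℝ, u₀ < u → β / (β + u) ≤ ε / 2 := by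
    intro u hu
    have hu_pos : 0 < u := lt_trans hu₀_pos hu
    have h1 : β / (β + u) ≤ β / u := by
      apply div_le_div_of_nonneg_left hβ.le hu_pos; linarith
    have h2 : β / u ≤ β / u₀ := div_le_div_of_nonneg_left hβ.le hu₀_pos hu.le
    have h3 : β / u₀ ≤ ε / 2 := by
      rw [div_le_div_iff₀ hu₀_pos (by norm_num : (0:ℝ) < 2)]
      have := mul_le_mul_of_nonneg_right hu₀_ge hε.le
      rw [div_mul_cancel₀ _ hε.ne'] at this
      linarith
    linarith
  -- constants
  set W : ℝ := ∫ u in Ioi (0:ℝ), w u with hW_def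
  set c : ℝ := ∫ u in Ioc u₁ (u₁ + 1), w u with hc_def
  have hW_nonneg : 0 ≤ W :=
    setIntegral_nonneg measurableSet_Ioi fun u hu => (hw_pos u hu).le
  have hIoc_sub : Ioc u₁ (u₁ + 1) ⊆ Ioi (0:ℝ) := fun u hu =>
    lt_trans hu₁_pos hu.1
  have hc_pos : 0 < c := by
    rw [hc_def, setIntegral_pos_iff_support_of_nonneg_ae ?_ (hw_int.mono_set hIoc_sub)]
    · have hsub : Ioc u₁ (u₁ + 1) ⊆ Function.support w := fun u hu =>
        (hw_pos u (hIoc_sub hu)).ne'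
      have : Function.support w ∩ Ioc u₁ (u₁ + 1) = Ioc u₁ (u₁ + 1) := inter_eq_right.mpr hsub
      rw [this, Real.volume_Ioc]
      simp
    · filter_upwards [ae_restrict_mem measurableSet_Ioc] with u hu
      exact (hw_pos u (hIoc_sub hu)).le
  -- lower bound for the denominator
  have hD_lb : ∀ y : ℕ, r₁ ^ y * c ≤ ∫ u in Ioi (0:ℝ), F y u := by
    intro y
    have h1 : ∫ u in Ioc u₁ (u₁ + 1), F y u ≤ ∫ u in Ioi (0:ℝ), F y u := by
      apply setIntegral_mono_set (hF_int y) ?_ (HasSubset.Subset.eventuallyLE hIoc_sub)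
      filter_upwards [ae_restrict_mem measurableSet_Ioi] with u hu
      exact hF_nonneg y u hu
    have h2 : r₁ ^ y * c ≤ ∫ u in Ioc u₁ (u₁ + 1), F y u := by
      rw [hc_def, ← integral_const_mul]
      apply setIntegral_mono_on ((hw_int.mono_set hIoc_sub).const_mul _)
        ((hF_int y).mono_set hIoc_sub) measurableSet_Ioc
      intro u hu
      rw [hFw]
      apply mul_le_mul_of_nonneg_right ?_ (hw_pos u (hIoc_sub hu)).le
      exact pow_le_pow_left₀ hr₁_pos.le (hr_mono u₁ hu₁_mem u (hIoc_sub hu) hu.1.le) y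
    linarith
  -- upper bound for the restricted numerator piece
  have hA_ub : ∀ y : ℕ, (∫ u in Ioc 0 u₀, F y u) ≤ r₀ ^ y * W := by
    intro y
    have hIoc0_sub : Ioc (0:ℝ) u₀ ⊆ Ioi (0:ℝ) := fun u hu => hu.1
    have h1 : (∫ u in Ioc 0 u₀, F y u) ≤ ∫ u in Ioc 0 u₀, r₀ ^ y * w u := by
      apply setIntegral_mono_on ((hF_int y).mono_set hIoc0_sub)
        ((hw_int.mono_set hIoc0_sub).const_mul _) measurableSet_Ioc
      intro u hu
      rw [hFw]
      apply mul_le_mul_of_nonneg_right ?_ (hw_pos u (hIoc0_sub hu)).le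
      exact pow_le_pow_left₀ (hr_nonneg u (hIoc0_sub hu)) (hr_mono u (hIoc0_sub hu) u₀ hu₀_mem hu.2) y
    have h2 : (∫ u in Ioc 0 u₀, r₀ ^ y * w u) ≤ r₀ ^ y * W := by
      rw [hW_def, ← integral_const_mul]
      apply setIntegral_mono_set (hw_int.const_mul _) ?_ (HasSubset.Subset.eventuallyLE hIoc0_sub)
      filter_upwards [ae_restrict_mem measurableSet_Ioi] with u hu
      exact mul_nonneg (pow_nonneg hr₀_pos.le y) (hw_pos u hu).le
    linarith
  -- numerator bound: N y ≤ (ε/2) * D y + A y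
  have hN_ub : ∀ y : ℕ,
      (∫ u in Ioi (0:ℝ), (β / (β + u)) * F y u) ≤
        ε / 2 * (∫ u in Ioi (0:ℝ), F y u) + ∫ u in Ioc 0 u₀, F y u := by
    intro y
    have hind_int : IntegrableOn (Set.indicator (Ioc 0 u₀) (F y)) (Ioi 0) :=
      (hF_int y).indicator measurableSet_Ioc
    have h1 : (∫ u in Ioi (0:ℝ), (β / (β + u)) * F y u) ≤
        ∫ u in Ioi (0:ℝ), (ε / 2 * F y u + Set.indicator (Ioc 0 u₀) (F y) u) := by
      apply setIntegral_mono_on (hG_int y)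
        (((hF_int y).const_mul _).add hind_int) measurableSet_Ioi
      intro u hu
      simp only [Pi.add_apply]
      by_cases hcase : u ≤ u₀
      · have hind : Set.indicator (Ioc 0 u₀) (F y) u = F y u :=
          Set.indicator_of_mem (show u ∈ Ioc (0:ℝ) u₀ from ⟨hu, hcase⟩) (F y)
        rw [hind]
        have h2 : (β / (β + u)) * F y u ≤ F y u :=
          mul_le_of_le_one_left (hF_nonneg y u hu) (hs_le_one u hu)
        have h3 : 0 ≤ ε / 2 * F y u := mul_nonneg (by positivity) (hF_nonneg y u hu)
        linarith
      · have hind : Set.indicator (Ioc 0 u₀) (F y) u = 0 :=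
          Set.indicator_of_notMem (fun h => hcase h.2) (F y)
        rw [hind, add_zero]
        exact mul_le_mul_of_nonneg_right (hsmall u (lt_of_not_ge hcase)) (hF_nonneg y u hu)
    have h2 : (∫ u in Ioi (0:ℝ), (ε / 2 * F y u + Set.indicator (Ioc 0 u₀) (F y) u)) =
        ε / 2 * (∫ u in Ioi (0:ℝ), F y u) + ∫ u in Ioc 0 u₀, F y u := by
      rw [integral_add ((hF_int y).const_mul _) hind_int, integral_const_mul,
        setIntegral_indicator measurableSet_Ioc]
      congr 2
      rw [Set.inter_eq_right.mpr (fun u hu => hu.1)]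
    linarith [h1, h2.le, h2.ge]
  -- geometric decay
  set q : ℝ := r₀ / r₁ with hq_def
  have hq_nonneg : 0 ≤ q := div_nonneg hr₀_pos.le hr₁_pos.le
  have hq_lt_one : q < 1 := (div_lt_one hr₁_pos).mpr hr₀_lt_r₁
  have htend : Tendsto (fun y : ℕ => W / c * q ^ y) atTop (nhds 0) := by
    have := tendsto_pow_atTop_nhds_zero_of_lt_one hq_nonneg hq_lt_one
    simpa using this.const_mul (W / c)
  have hev : ∀ᶠ y : ℕ in atTop, W / c * q ^ y < ε / 2 := by
    have h2 : (0:ℝ) < ε / 2 := by positivity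
    exact htend.eventually_lt_const h2
  filter_upwards [hev] with y hy
  have hD := hD_pos y
  have hDlb := hD_lb y
  have hr₁c_pos : 0 < r₁ ^ y * c := mul_pos (pow_pos hr₁_pos y) hc_pos
  set N : ℝ := ∫ u in Ioi (0:ℝ), (β / (β + u)) * F y u with hN_def
  set D : ℝ := ∫ u in Ioi (0:ℝ), F y u with hD_def
  set A : ℝ := ∫ u in Ioc (0:ℝ) u₀, F y u with hA_def
  have hAD : A / D ≤ W / c * q ^ y := by
    have h1 : A / D ≤ r₀ ^ y * W / (r₁ ^ y * c) :=
      div_le_div₀ (mul_nonneg (pow_nonneg hr₀_pos.le y) hW_nonneg) (hA_ub y) hr₁c_pos hDlb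
    have h2 : r₀ ^ y * W / (r₁ ^ y * c) = W / c * q ^ y := by
      conv_rhs => rw [hq_def, div_pow, div_mul_div_comm]
      rw [mul_comm (r₀ ^ y) W, mul_comm (r₁ ^ y) c]
    linarith [h1, h2.le, h2.ge]
  have hNd : N / D ≤ ε / 2 + A / D := by
    have h1 : N / D ≤ (ε / 2 * D + A) / D := (div_le_div_iff_of_pos_right hD).mpr (hN_ub y)
    have h2 : (ε / 2 * D + A) / D = ε / 2 + A / D := by
      rw [add_div, mul_div_assoc, div_self hD.ne', mul_one]
    linarith
  have habs : ‖N / D‖ = N / D := by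
    rw [Real.norm_eq_abs, abs_of_nonneg (div_nonneg (hN_nonneg y) hD.le)]
  rw [habs]
  linarith [hNd, hAD, hy]
end

section
/- Weak tail-robustness: Let π be a strictly positive integrable function on (0,∞), α, β > 0, and for y ∈ ℕ let λ̃(y) = ∫₀^∞ (u/(β+u))(α+y) W(u;y)π(u) du / ∫₀^∞ W(u;y)π(u) du with W(u;y) = u^y (1+u/β)^{-(y+α)}. Then lim_{y→∞} |λ̃(y) - y|/y = 0. -/
/-!
Write `W(u; y) π(u) = g(u)^y ν(u)` with `g u = u / (1 + u / β) = β u / (β + u)` and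
`ν(u) = (1 + u / β)^(-α) π(u)`. Since `u / (β + u) = g(u) / β`, the estimator is
`λ̃(y) = (α + y) / β · m_{y+1} / m_y`, where `m_n = ∫ g^n dν` are the moments of `g` under the
finite measure `ν`. As `g < β` and `g → β` at infinity, `β` is the essential supremum of `g`
under `ν`, and for any bounded nonnegative function the ratio of consecutive moments tends to the
essential supremum: `m_{n+1} ≤ β m_n`, while for `a < b < β` the bounds
`m_{n+1} ≥ a m_n - a^{n+1} ν(univ)` and `m_n ≥ b^n ν{g > b}` give `m_{n+1} / m_n ≥ a - O((a/b)^n)`.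
Hence `λ̃(y) / y → 1`.
-/

open Real Set Filter MeasureTheory ProbabilityTheory Topology

lemma mul_pow_sub_pow_succ_le_pow_succ {x c : ℝ} (hx : 0 ≤ x) (hc : 0 ≤ c) (n : ℕ) :
    c * x ^ n - c ^ (n + 1) ≤ x ^ (n + 1) := by
  rcases le_total c x with hcx | hxc
  · have : c * x ^ n ≤ x ^ (n + 1) := by
      rw [pow_succ']; exact mul_le_mul_of_nonneg_right hcx (pow_nonneg hx n)
    linarith [pow_nonneg hc (n + 1)]
  · have : c * x ^ n ≤ c ^ (n + 1) := by
      rw [pow_succ']; exact mul_le_mul_of_nonneg_left (pow_le_pow_left₀ hx hxc n) hc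
    linarith [pow_nonneg hx (n + 1)]

lemma mul_rpow_neg_natCast_add {u x : ℝ} (hx : 0 < x) (n : ℕ) (a : ℝ) :
    u ^ n * x ^ (-((n : ℝ) + a)) = (u / x) ^ n * x ^ (-a) := by
  rw [neg_add, rpow_add hx, rpow_neg hx.le, rpow_natCast, div_pow]
  field_simp

lemma lt_div_one_add_div {β c u : ℝ} (hβ : 0 < β) (hcβ : c < β) (hu : 0 < u)
    (hcu : c * β / (β - c) < u) : c < u / (1 + u / β) := by
  rw [div_lt_iff₀ (sub_pos.2 hcβ)] at hcu
  rw [lt_div_iff₀ (by positivity)]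
  field_simp
  linarith

lemma div_one_add_div_le {β u : ℝ} (hβ : 0 < β) (hu : 0 ≤ u) : u / (1 + u / β) ≤ β := by
  rw [div_le_iff₀ (by positivity)]
  field_simp
  linarith

lemma integral_withDensity_ofReal {X : Type*} [MeasurableSpace X] {ρ : Measure X} {w : X → ℝ}
    (hw : AEMeasurable w ρ) (hw0 : ∀ᵐ x ∂ρ, 0 ≤ w x) (f : X → ℝ) :
    ∫ x, f x ∂ρ.withDensity (fun x => ENNReal.ofReal (w x)) = ∫ x, w x * f x ∂ρ := by
  rw [integral_withDensity_eq_integral_toReal_smul₀ hw.ennreal_ofReal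
    (ae_of_all _ fun _ => ENNReal.ofReal_lt_top)]
  refine integral_congr_ae ?_
  filter_upwards [hw0] with x hx
  simp [ENNReal.toReal_ofReal hx]

lemma tendsto_abs_mul_sub_div_of_tendsto {r : ℕ → ℝ} {α β : ℝ} (hβ : β ≠ 0)
    (hr : Tendsto r atTop (𝓝 β)) :
    Tendsto (fun n : ℕ => |(α + n) / β * r n - n| / n) atTop (𝓝 0) := by
  have hlim : Tendsto (fun n : ℕ => |(α * (1 / (n : ℝ)) + 1) * (r n / β) - 1|) atTop
      (𝓝 |(α * 0 + 1) * (β / β) - 1|) :=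
    ((((tendsto_one_div_atTop_nhds_zero_nat.const_mul α).add_const 1).mul
      (hr.div_const β)).sub_const 1).abs
  simp only [mul_zero, zero_add, one_mul, div_self hβ, sub_self, abs_zero] at hlim
  refine hlim.congr' ?_
  filter_upwards [eventually_gt_atTop 0] with n hn
  have hn' : (0 : ℝ) < n := Nat.cast_pos.2 hn
  rw [← abs_of_pos hn', ← abs_div, abs_of_pos hn']
  congr 1
  field_simp

section MomentRatio

variable {Ω : Type*} [MeasurableSpace Ω] {μ : Measure Ω} {g : Ω → ℝ} {M : ℝ}

lemma integrable_pow_of_ae_bounded [IsFiniteMeasure μ] (hg : Measurable g)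
    (hg0 : ∀ᵐ x ∂μ, 0 ≤ g x) (hgM : ∀ᵐ x ∂μ, g x ≤ M) (n : ℕ) :
    Integrable (fun x => g x ^ n) μ := by
  refine .of_bound (hg.pow_const n).aestronglyMeasurable (M ^ n) ?_
  filter_upwards [hg0, hgM] with x hx0 hxM
  rw [Real.norm_eq_abs, abs_pow, abs_of_nonneg hx0]
  exact pow_le_pow_left₀ hx0 hxM n

lemma moment_nonneg_of_ae_nonneg (hg0 : ∀ᵐ x ∂μ, 0 ≤ g x) (n : ℕ) : 0 ≤ moment g n μ :=
  integral_nonneg_of_ae <| by filter_upwards [hg0] with x hx using pow_nonneg hx n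

variable [IsFiniteMeasure μ] (hg : Measurable g) (hg0 : ∀ᵐ x ∂μ, 0 ≤ g x)
  (hgM : ∀ᵐ x ∂μ, g x ≤ M)
include hg hg0 hgM

lemma moment_succ_le_mul_moment (n : ℕ) : moment g (n + 1) μ ≤ M * moment g n μ := by
  have hint := integrable_pow_of_ae_bounded hg hg0 hgM
  rw [moment, moment, ← integral_const_mul]
  refine integral_mono_ae (hint _) ((hint n).const_mul M) ?_
  filter_upwards [hg0, hgM] with x hx0 hxM
  simp only [Pi.pow_apply, pow_succ']
  exact mul_le_mul_of_nonneg_right hxM (pow_nonneg hx0 n)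

lemma pow_mul_measureReal_lt_le_moment {c : ℝ} (hc : 0 ≤ c) (n : ℕ) :
    c ^ n * μ.real {x | c < g x} ≤ moment g n μ := by
  have hs : MeasurableSet {x | c < g x} := measurableSet_lt measurable_const hg
  rw [mul_comm, ← smul_eq_mul, ← integral_indicator_const _ hs]
  refine integral_mono_ae ((integrable_const _).indicator hs)
    (integrable_pow_of_ae_bounded hg hg0 hgM n) ?_
  filter_upwards [hg0] with x hx0
  by_cases hx : c < g x
  · simpa [Set.indicator_of_mem (show x ∈ {x | c < g x} from hx)] using
      pow_le_pow_left₀ hc hx.le n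
  · simpa [Set.indicator_of_notMem (show x ∉ {x | c < g x} from hx)] using pow_nonneg hx0 n

lemma mul_moment_sub_le_moment_succ {c : ℝ} (hc : 0 ≤ c) (n : ℕ) :
    c * moment g n μ - c ^ (n + 1) * μ.real univ ≤ moment g (n + 1) μ := by
  have hint := integrable_pow_of_ae_bounded hg hg0 hgM
  calc c * moment g n μ - c ^ (n + 1) * μ.real univ
      = ∫ x, (c * g x ^ n - c ^ (n + 1)) ∂μ := by
        rw [integral_sub ((hint n).const_mul c) (integrable_const _), integral_const_mul,
          integral_const, smul_eq_mul, mul_comm (μ.real univ)]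
        rfl
    _ ≤ ∫ x, g x ^ (n + 1) ∂μ := integral_mono_ae (((hint n).const_mul c).sub
        (integrable_const _)) (hint _) (hg0.mono fun x hx0 =>
          mul_pow_sub_pow_succ_le_pow_succ hx0 hc n)
    _ = moment g (n + 1) μ := rfl

lemma sub_le_moment_succ_div_moment {a b : ℝ} (ha : 0 ≤ a) (hb : 0 < b)
    (hp : 0 < μ.real {x | b < g x}) (n : ℕ) :
    a - a * (a / b) ^ n * (μ.real univ / μ.real {x | b < g x}) ≤
      moment g (n + 1) μ / moment g n μ := by
  set p := μ.real {x | b < g x}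
  have hm := pow_mul_measureReal_lt_le_moment hg hg0 hgM hb.le n
  rw [le_div_iff₀ (lt_of_lt_of_le (by positivity) hm)]
  have herror : a ^ (n + 1) * μ.real univ ≤
      a * (a / b) ^ n * (μ.real univ / p) * moment g n μ :=
    calc a ^ (n + 1) * μ.real univ = a * (a / b) ^ n * (μ.real univ / p) * (b ^ n * p) := by
          rw [div_pow]
          field_simp
          ring
      _ ≤ _ := mul_le_mul_of_nonneg_left hm (by positivity)
  linarith [mul_moment_sub_le_moment_succ hg hg0 hgM ha n]

theorem tendsto_moment_succ_div_moment (hM : ∀ c < M, μ {x | c < g x} ≠ 0) :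
    Tendsto (fun n => moment g (n + 1) μ / moment g n μ) atTop (𝓝 M) := by
  have hM0 : 0 ≤ M := by
    have : NeZero μ := ⟨fun h => hM (M - 1) (by linarith) (by simp [h])⟩
    obtain ⟨x, hx0, hxM⟩ := (hg0.and hgM).exists
    linarith
  refine tendsto_order.2 ⟨fun c hc => ?_, fun d hd => .of_forall fun n => ?_⟩
  · rcases lt_or_ge c 0 with hc0 | hc0
    · exact .of_forall fun n => hc0.trans_le
        (div_nonneg (moment_nonneg_of_ae_nonneg hg0 _) (moment_nonneg_of_ae_nonneg hg0 _))
    obtain ⟨a, hca, haM⟩ := exists_between hc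
    obtain ⟨b, hab, hbM⟩ := exists_between haM
    have hp : 0 < μ.real {x | b < g x} := ENNReal.toReal_pos (hM b hbM) (measure_ne_top _ _)
    have ha : 0 < a := hc0.trans_lt hca
    have hb : 0 < b := ha.trans hab
    have hlim : Tendsto (fun n => a - a * (a / b) ^ n * (μ.real univ / μ.real {x | b < g x}))
        atTop (𝓝 a) := by
      simpa using (((tendsto_pow_atTop_nhds_zero_of_lt_one (by positivity)
        ((div_lt_one hb).2 hab)).const_mul a).mul_const _).const_sub a
    filter_upwards [hlim.eventually (lt_mem_nhds hca)] with n hn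
    exact hn.trans_le (sub_le_moment_succ_div_moment hg hg0 hgM ha.le hb hp n)
  · exact (div_le_of_le_mul₀ (moment_nonneg_of_ae_nonneg hg0 _) hM0
      (moment_succ_le_mul_moment hg hg0 hgM n)).trans_lt hd

end MomentRatio

section TiltedPrior

variable {α β : ℝ} {pdf : ℝ → ℝ}

noncomputable def tiltedPrior (α β : ℝ) (pdf : ℝ → ℝ) : Measure ℝ :=
  (volume.restrict (Ioi 0)).withDensity fun u => ENNReal.ofReal ((1 + u / β) ^ (-α) * pdf u)

lemma ae_tiltedPrior {P : ℝ → Prop} (hP : ∀ u ∈ Ioi (0 : ℝ), P u) :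
    ∀ᵐ u ∂tiltedPrior α β pdf, P u :=
  withDensity_absolutelyContinuous _ _ ((ae_restrict_iff' measurableSet_Ioi).2 (.of_forall hP))

lemma integrableOn_one_add_div_rpow_neg_mul (hβ : 0 < β) (hα : 0 ≤ α)
    (hpdf : ∀ u ∈ Ioi (0 : ℝ), 0 ≤ pdf u) (hint : IntegrableOn pdf (Ioi 0)) :
    IntegrableOn (fun u => (1 + u / β) ^ (-α) * pdf u) (Ioi 0) := by
  have hmeas : Measurable fun u : ℝ => (1 + u / β) ^ (-α) := by fun_prop
  refine hint.mono' (hmeas.aestronglyMeasurable.mul hint.1)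
    ((ae_restrict_iff' measurableSet_Ioi).2 (.of_forall fun u hu => ?_))
  have hu : 0 < u := hu
  rw [norm_mul, norm_of_nonneg (hpdf u hu), norm_of_nonneg (by positivity)]
  exact mul_le_of_le_one_left (hpdf u hu) (rpow_le_one_of_one_le_of_nonpos
    (le_add_of_nonneg_right (by positivity)) (neg_nonpos.2 hα))

lemma isFiniteMeasure_tiltedPrior (hβ : 0 < β) (hα : 0 ≤ α)
    (hpdf : ∀ u ∈ Ioi (0 : ℝ), 0 ≤ pdf u) (hint : IntegrableOn pdf (Ioi 0)) :
    IsFiniteMeasure (tiltedPrior α β pdf) :=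
  isFiniteMeasure_withDensity_ofReal (integrableOn_one_add_div_rpow_neg_mul hβ hα hpdf hint).2

lemma moment_tiltedPrior (hβ : 0 < β) (hpdf : ∀ u ∈ Ioi (0 : ℝ), 0 ≤ pdf u)
    (hpdf_meas : AEMeasurable pdf (volume.restrict (Ioi 0))) (n : ℕ) :
    moment (fun u => u / (1 + u / β)) n (tiltedPrior α β pdf) =
      ∫ u in Ioi 0, u ^ n * (1 + u / β) ^ (-((n : ℝ) + α)) * pdf u := by
  rw [moment, tiltedPrior, integral_withDensity_ofReal (by fun_prop)
    ((ae_restrict_iff' measurableSet_Ioi).2 (.of_forall fun u (hu : 0 < u) => by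
      have := hpdf u hu
      positivity))]
  refine setIntegral_congr_fun measurableSet_Ioi fun u (hu : 0 < u) => ?_
  rw [Pi.pow_apply, mul_rpow_neg_natCast_add (by positivity)]
  ring

lemma tiltedPrior_setOf_lt_ne_zero (hβ : 0 < β) (hpdf : ∀ u ∈ Ioi (0 : ℝ), 0 < pdf u)
    (hpdf_meas : AEMeasurable pdf (volume.restrict (Ioi 0))) {c : ℝ} (hc : c < β) :
    tiltedPrior α β pdf {u | c < u / (1 + u / β)} ≠ 0 := by
  rw [tiltedPrior, Ne, withDensity_apply_eq_zero' (by fun_prop),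
    Measure.restrict_apply' measurableSet_Ioi]
  refine ne_of_gt (lt_of_lt_of_le ?_ (measure_mono (s := Ioi (max 0 (c * β / (β - c)))) ?_))
  · simp
  · intro u hu
    have hu0 : 0 < u := (le_max_left _ _).trans_lt (mem_Ioi.1 hu)
    exact ⟨⟨(ENNReal.ofReal_pos.2 (mul_pos (by positivity) (hpdf u hu0))).ne',
      lt_div_one_add_div hβ hc hu0 ((le_max_right _ _).trans_lt (mem_Ioi.1 hu))⟩, hu0⟩

lemma integral_mul_eq_moment_succ (hβ : 0 < β) (hpdf : ∀ u ∈ Ioi (0 : ℝ), 0 ≤ pdf u)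
    (hpdf_meas : AEMeasurable pdf (volume.restrict (Ioi 0))) (y : ℕ) :
    ∫ u in Ioi 0, u / (β + u) * (α + y) * (u ^ y * (1 + u / β) ^ (-((y : ℝ) + α)) * pdf u) =
      (α + y) / β * moment (fun u => u / (1 + u / β)) (y + 1) (tiltedPrior α β pdf) := by
  rw [moment_tiltedPrior hβ hpdf hpdf_meas, ← integral_const_mul]
  refine setIntegral_congr_fun measurableSet_Ioi fun u (hu : 0 < u) => ?_
  have hx : 0 < 1 + u / β := by positivity
  have hdiv : u / (β + u) = u / (1 + u / β) / β := by field_simp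
  rw [mul_rpow_neg_natCast_add hx, mul_rpow_neg_natCast_add hx, hdiv, pow_succ]
  ring

end TiltedPrior

theorem weak_tail_robustness
    (α β : ℝ) (hα : 0 < α) (hβ : 0 < β)
    (pdf : ℝ → ℝ)
    (hpos : ∀ u ∈ Set.Ioi (0:ℝ), 0 < pdf u)
    (hint : IntegrableOn pdf (Set.Ioi 0))
    (lt : ℕ → ℝ)
    (hlt : ∀ y : ℕ, lt y =
      (∫ u in Set.Ioi (0:ℝ),
          (u / (β + u)) * (α + y) * (u ^ y * (1 + u / β) ^ (-((y:ℝ) + α)) * pdf u)) /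
      (∫ u in Set.Ioi (0:ℝ), u ^ y * (1 + u / β) ^ (-((y:ℝ) + α)) * pdf u)) :
    Filter.Tendsto (fun y : ℕ => |lt y - y| / y) Filter.atTop (nhds 0) := by
  have hpdf : ∀ u ∈ Ioi (0 : ℝ), 0 ≤ pdf u := fun u hu => (hpos u hu).le
  have := isFiniteMeasure_tiltedPrior hβ hα.le hpdf hint
  have hratio := tendsto_moment_succ_div_moment (μ := tiltedPrior α β pdf) (M := β)
    (by fun_prop) (ae_tiltedPrior fun u (hu : 0 < u) => by positivity)
    (ae_tiltedPrior fun u hu => div_one_add_div_le hβ (le_of_lt hu))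
    fun c hc => tiltedPrior_setOf_lt_ne_zero hβ hpos hint.aemeasurable hc
  refine (tendsto_abs_mul_sub_div_of_tendsto (α := α) hβ.ne' hratio).congr fun y => ?_
  rw [hlt, integral_mul_eq_moment_succ hβ hpdf hint.aemeasurable,
    ← moment_tiltedPrior hβ hpdf hint.aemeasurable, mul_div_assoc]
end

section
/- If X | w ~ Ga(1, v), v | w ~ Ga(w, 1), w ~ Ga(γ, 1) (all rate parametrization), then the marginal density of X is the EH density: ∫₀^∞∫₀^∞ v e^{-vx} · (v^{w-1}e^{-v}/Γ(w)) · (w^{γ-1}e^{-w}/Γ(γ)) dv dw = γ/(1+x) · (1+log(1+x))^{-(1+γ)} for all x > 0. -/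
open Real Set MeasureTheory

theorem eh_augmentation (γ : ℝ) (hγ : 0 < γ) (x : ℝ) (hx : 0 < x) :
    ∫ w in Set.Ioi (0:ℝ), ∫ v in Set.Ioi (0:ℝ),
        v * Real.exp (-v * x) * (v ^ (w - 1) * Real.exp (-v) / Real.Gamma w) *
          (w ^ (γ - 1) * Real.exp (-w) / Real.Gamma γ)
      = γ / (1 + x) * (1 + Real.log (1 + x)) ^ (-(1 + γ)) := by
  have hx1 : (0:ℝ) < 1 + x := by linarith
  have hlog : 0 < Real.log (1 + x) := Real.log_pos (by linarith)
  have hl : 0 < 1 + Real.log (1 + x) := by linarith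
  have hΓγ : Real.Gamma γ ≠ 0 := (Real.Gamma_pos_of_pos hγ).ne'
  have h1 : ∀ w ∈ Set.Ioi (0:ℝ),
      (∫ v in Set.Ioi (0:ℝ),
        v * Real.exp (-v * x) * (v ^ (w - 1) * Real.exp (-v) / Real.Gamma w) *
          (w ^ (γ - 1) * Real.exp (-w) / Real.Gamma γ))
      = (1 / ((1 + x) * Real.Gamma γ)) *
          (w ^ ((γ + 1) - 1) * Real.exp (-((1 + Real.log (1 + x)) * w))) := by
    intro w hw
    have hw0 : 0 < w := hw
    have hΓw : Real.Gamma w ≠ 0 := (Real.Gamma_pos_of_pos hw0).ne'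
    have step1 : ∀ v ∈ Set.Ioi (0:ℝ),
        v * Real.exp (-v * x) * (v ^ (w - 1) * Real.exp (-v) / Real.Gamma w) *
          (w ^ (γ - 1) * Real.exp (-w) / Real.Gamma γ)
        = v ^ ((w + 1) - 1) * Real.exp (-((1 + x) * v)) *
            (w ^ (γ - 1) * Real.exp (-w) / (Real.Gamma w * Real.Gamma γ)) := by
      intro v hv
      have hv0 : 0 < v := hv
      rw [show (w + 1) - 1 = 1 + (w - 1) by ring, Real.rpow_add hv0, Real.rpow_one,
        show -((1 + x) * v) = -v * x + -v by ring, Real.exp_add]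
      ring
    rw [setIntegral_congr_fun measurableSet_Ioi step1, integral_mul_const,
      integral_rpow_mul_exp_neg_mul_Ioi (by linarith : (0:ℝ) < w + 1) hx1,
      Real.Gamma_add_one hw0.ne']
    have e1 : ((1:ℝ) / (1 + x)) ^ (w + 1)
        = Real.exp (-Real.log (1 + x) * w) * (1 / (1 + x)) := by
      rw [Real.rpow_def_of_pos (by positivity), one_div, Real.log_inv,
        show -Real.log (1 + x) * (w + 1) = -Real.log (1 + x) * w + -Real.log (1 + x) by ring,
        Real.exp_add, Real.exp_neg, Real.exp_log hx1]
    rw [e1, show -((1 + Real.log (1 + x)) * w) = -w + -Real.log (1 + x) * w by ring,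
      Real.exp_add, show (γ + 1) - 1 = 1 + (γ - 1) by ring, Real.rpow_add hw0, Real.rpow_one]
    field_simp
  rw [setIntegral_congr_fun measurableSet_Ioi h1, integral_const_mul,
    integral_rpow_mul_exp_neg_mul_Ioi (by linarith : (0:ℝ) < γ + 1) hl,
    Real.Gamma_add_one hγ.ne',
    show ((1:ℝ) / (1 + Real.log (1 + x))) ^ (γ + 1) = (1 + Real.log (1 + x)) ^ (-(1 + γ)) by
      rw [one_div, Real.inv_rpow hl.le, ← Real.rpow_neg hl.le, show -(γ + 1) = -(1 + γ) by ring]]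
  field_simp
end
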